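/- Let s₁,…,s_n ∈ ℝ^{d+1} be n ≥ 2 pairwise-distinct stations all lying in the hyperplane {x ∈ ℝ^{d+1} : x_{d+1} = 0}, with powers P₁,…,P_n > 0, noise N ≥ 0, threshold β > 0 and path-loss exponent 2α for some real α ≥ 1. Then for every i, the reception zone H_i ⊆ ℝ^{d+1} of station s_i is connected. -/
import Mathlib


open Finset

/-- SINR of station `i` at point `p`, for stations `s`, powers `P`, noise `N`
and path-loss exponent `2α`. -/
noncomputable def sinrA {m n : ℕ} (s : Fin n → EuclideanSpace ℝ (Fin m))
    (P : Fin n → ℝ) (N α : ℝ) (i : Fin n) (p : EuclideanSpace ℝ (Fin m)) : ℝ :=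
  P i * dist p (s i) ^ (-(2 * α)) /
    ((∑ j ∈ Finset.univ.erase i, P j * dist p (s j) ^ (-(2 * α))) + N)

/-- The reception zone of station `i` (path-loss exponent `2α`). -/
noncomputable def recZoneA {m n : ℕ} (s : Fin n → EuclideanSpace ℝ (Fin m))
    (P : Fin n → ℝ) (N α β : ℝ) (i : Fin n) : Set (EuclideanSpace ℝ (Fin m)) :=
  {p | p ∉ Set.range s ∧ β ≤ sinrA s P N α i p} ∪ {s i}

open RealInnerProductSpace

private lemma rpow_ratio_aux {M R : ℝ} (hM : 0 ≤ M) (hR : 0 < R) (c : ℝ) :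
    (M / R) ^ (-c) = M ^ (-c) * R ^ c := by
  rw [Real.div_rpow hM hR.le, Real.rpow_neg hR.le, div_eq_mul_inv, inv_inv]

/-- Algebraic characterization of the SINR threshold condition. -/
private lemma sinr_char {m n : ℕ} (s : Fin n → EuclideanSpace ℝ (Fin m))
    (P : Fin n → ℝ) (hP : ∀ j, 0 < P j) (N β α : ℝ) (hN : 0 ≤ N)
    (i : Fin n) (hne : (Finset.univ.erase i).Nonempty)
    (z : EuclideanSpace ℝ (Fin m)) (hz : ∀ j, z ≠ s j) :
    β ≤ sinrA s P N α i z ↔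
      β * ((∑ j ∈ Finset.univ.erase i,
          P j * (dist z (s j) / dist z (s i)) ^ (-(2 * α)))
        + N * dist z (s i) ^ (2 * α)) ≤ P i := by
  have hRz : 0 < dist z (s i) := dist_pos.2 (hz i)
  have hD : 0 < (∑ j ∈ Finset.univ.erase i, P j * dist z (s j) ^ (-(2 * α))) + N :=
    add_pos_of_pos_of_nonneg (Finset.sum_pos (fun j _ => mul_pos (hP j)
      (Real.rpow_pos_of_pos (dist_pos.2 (hz j)) _)) hne) hN
  have hRp : 0 < dist z (s i) ^ (2 * α) := Real.rpow_pos_of_pos hRz _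
  have h1 : (P i * dist z (s i) ^ (-(2 * α))) * dist z (s i) ^ (2 * α) = P i := by
    rw [mul_assoc, ← Real.rpow_add hRz, neg_add_cancel, Real.rpow_zero, mul_one]
  have h2 : (β * ((∑ j ∈ Finset.univ.erase i, P j * dist z (s j) ^ (-(2 * α))) + N))
      * dist z (s i) ^ (2 * α)
      = β * ((∑ j ∈ Finset.univ.erase i,
          P j * (dist z (s j) / dist z (s i)) ^ (-(2 * α)))
        + N * dist z (s i) ^ (2 * α)) := by
    rw [mul_assoc, add_mul, Finset.sum_mul]
    congr 2
    refine Finset.sum_congr rfl fun j _ => ?_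
    rw [rpow_ratio_aux dist_nonneg hRz, mul_assoc]
  rw [sinrA, le_div_iff₀ hD]
  constructor
  · intro h
    have h' := mul_le_mul_of_nonneg_right h hRp.le
    rwa [h2, h1] at h'
  · intro h
    have h3 : β * ((∑ j ∈ Finset.univ.erase i, P j * dist z (s j) ^ (-(2 * α))) + N)
        = (β * ((∑ j ∈ Finset.univ.erase i,
            P j * (dist z (s j) / dist z (s i)) ^ (-(2 * α)))
          + N * dist z (s i) ^ (2 * α))) * dist z (s i) ^ (-(2 * α)) := by
      rw [← h2, mul_assoc, ← Real.rpow_add hRz, add_neg_cancel, Real.rpow_zero, mul_one]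
    rw [h3]
    exact mul_le_mul_of_nonneg_right h (Real.rpow_pos_of_pos hRz _).le

set_option maxHeartbeats 2000000 in
theorem zones_connected_one_dimension_higher {d n : ℕ} (hn : 2 ≤ n)
    (s : Fin n → EuclideanSpace ℝ (Fin (d + 1))) (hs : Function.Injective s)
    (hplane : ∀ j, s j (Fin.last d) = 0)
    (P : Fin n → ℝ) (hP : ∀ j, 0 < P j)
    (N β α : ℝ) (hN : 0 ≤ N) (hβ : 0 < β) (hα : 1 ≤ α)
    (i : Fin n) :
    IsConnected (recZoneA s P N α β i) := by
  classical
  have hsi : s i ∈ recZoneA s P N α β i := Or.inr rfl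
  haveI : Nontrivial (Fin n) := Fin.nontrivial_iff_two_le.2 hn
  have hne : (Finset.univ.erase i).Nonempty := by
    obtain ⟨j, hj⟩ := exists_ne i
    exact ⟨j, Finset.mem_erase.2 ⟨hj, Finset.mem_univ j⟩⟩
  have key : ∀ p ∈ recZoneA s P N α β i, JoinedIn (recZoneA s P N α β i) (s i) p := by
    intro p hp
    by_cases hpi : p = s i
    · subst hpi; exact JoinedIn.refl hsi
    have hp' : p ∉ Set.range s ∧ β ≤ sinrA s P N α i p := by
      rcases hp with h | h
      · exact h
      · exact absurd h hpi
    have hpz : ∀ j, p ≠ s j := by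
      intro j
      rcases eq_or_ne j i with rfl | hji
      · exact hpi
      · exact fun h => hp'.1 ⟨j, h.symm⟩
    -- geometric setup
    set e : EuclideanSpace ℝ (Fin (d + 1)) := EuclideanSpace.single (Fin.last d) 1 with he_def
    set q : EuclideanSpace ℝ (Fin (d + 1)) := p - s i with hq_def
    have hee : ∀ x : EuclideanSpace ℝ (Fin (d + 1)), ⟪x, e⟫ = x (Fin.last d) := by
      intro x
      rw [he_def]
      rw [EuclideanSpace.inner_single_right]
      simp
    have henorm : ⟪e, e⟫ = 1 := by
      rw [hee]; rw [he_def]; simp [EuclideanSpace.single_apply]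
    have hwe : ∀ j, ⟪s j - s i, e⟫ = 0 := by
      intro j
      rw [inner_sub_left, hee, hee]
      simp only [hplane, sub_zero]
    set τ : ℝ := ⟪q, e⟫ with hτ_def
    set qH : EuclideanSpace ℝ (Fin (d + 1)) := q - τ • e with hqH_def
    have hqHe : ⟪qH, e⟫ = 0 := by
      rw [hqH_def, inner_sub_left, real_inner_smul_left, henorm, mul_one, sub_self]
    have hq_split : q = qH + τ • e := by rw [hqH_def]; abel
    have hPyth : ‖q‖ ^ 2 = ‖qH‖ ^ 2 + τ ^ 2 := by
      rw [hq_split, norm_add_sq_real, real_inner_smul_right, hqHe, mul_zero, mul_zero,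
        norm_smul, Real.norm_eq_abs, he_def, EuclideanSpace.norm_single, norm_one, mul_one,
        sq_abs]
      ring
    set σ : ℝ := if τ < 0 then -1 else 1 with hσ_def
    have hσsq : σ ^ 2 = 1 := by rw [hσ_def]; split <;> norm_num
    set w : ℝ → ℝ := fun t => σ * Real.sqrt (t * (‖q‖ ^ 2 - t * ‖qH‖ ^ 2)) with hw_def
    have harg : ∀ t : ℝ, 0 ≤ t → t ≤ 1 → 0 ≤ t * (‖q‖ ^ 2 - t * ‖qH‖ ^ 2) := by
      intro t ht0 ht1
      have h1 : 0 ≤ τ ^ 2 := sq_nonneg τ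
      have h2 : 0 ≤ ‖qH‖ ^ 2 := sq_nonneg _
      rw [hPyth]
      nlinarith [mul_nonneg ht0 h1,
        mul_nonneg (mul_nonneg ht0 (by linarith : (0:ℝ) ≤ 1 - t)) h2]
    have hwsq : ∀ t : ℝ, 0 ≤ t → t ≤ 1 → (w t) ^ 2 = t * (‖q‖ ^ 2 - t * ‖qH‖ ^ 2) := by
      intro t ht0 ht1
      have hwt : w t = σ * Real.sqrt (t * (‖q‖ ^ 2 - t * ‖qH‖ ^ 2)) := rfl
      rw [hwt, mul_pow, hσsq, one_mul, Real.sq_sqrt (harg t ht0 ht1)]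
    set f : ℝ → EuclideanSpace ℝ (Fin (d + 1)) := fun t => s i + t • qH + w t • e with hf_def
    -- the fundamental distance identity
    have hdist : ∀ (j : Fin n) (t : ℝ), 0 ≤ t → t ≤ 1 →
        dist (f t) (s j) ^ 2 = t * dist p (s j) ^ 2 + (1 - t) * dist (s i) (s j) ^ 2 := by
      intro j t ht0 ht1
      have hft : f t = s i + t • qH + w t • e := rfl
      have hsplit : f t - s j = (t • qH - (s j - s i)) + w t • e := by
        rw [hft]; abel
      have hinner0 : ⟪t • qH - (s j - s i), w t • e⟫ = 0 := by
        rw [real_inner_smul_right, inner_sub_left, real_inner_smul_left, hqHe, hwe]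
        ring
      have hnorm_we : ‖w t • e‖ ^ 2 = (w t) ^ 2 := by
        rw [norm_smul, Real.norm_eq_abs, he_def, EuclideanSpace.norm_single, norm_one, mul_one,
          sq_abs]
      have hqHw : ⟪qH, s j - s i⟫ = ⟪q, s j - s i⟫ := by
        rw [hqH_def, inner_sub_left, real_inner_smul_left, ← real_inner_comm e (s j - s i), hwe, mul_zero,
          sub_zero]
      have hLHS : dist (f t) (s j) ^ 2
          = t ^ 2 * ‖qH‖ ^ 2 - 2 * (t * ⟪q, s j - s i⟫) + ‖s j - s i‖ ^ 2
            + (t * (‖q‖ ^ 2 - t * ‖qH‖ ^ 2)) := by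
        rw [dist_eq_norm, hsplit, norm_add_sq_real, hinner0, mul_zero, add_zero, hnorm_we,
          hwsq t ht0 ht1, norm_sub_sq_real, real_inner_smul_left, hqHw, norm_smul,
          Real.norm_eq_abs, mul_pow, sq_abs]
      have hpj : dist p (s j) ^ 2 = ‖q‖ ^ 2 - 2 * ⟪q, s j - s i⟫ + ‖s j - s i‖ ^ 2 := by
        have : p - s j = q - (s j - s i) := by rw [hq_def]; abel
        rw [dist_eq_norm, this, norm_sub_sq_real]
      have hij : dist (s i) (s j) ^ 2 = ‖s j - s i‖ ^ 2 := by
        rw [dist_eq_norm, ← norm_neg]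
        congr 1
        abel
      rw [hLHS, hpj, hij]
      ring
    -- positivity of distances along the path
    have hApos : ∀ j, 0 < dist p (s j) := fun j => dist_pos.2 (hpz j)
    have hBpos : ∀ j, j ≠ i → 0 < dist (s i) (s j) := by
      intro j hji
      exact dist_pos.2 fun h => hji (hs h).symm
    have hdist_pos : ∀ (j : Fin n) (t : ℝ), 0 < t → t ≤ 1 → 0 < dist (f t) (s j) := by
      intro j t ht0 ht1
      have h2 : 0 < dist (f t) (s j) ^ 2 := by
        rw [hdist j t ht0.le ht1]
        rcases eq_or_ne j i with rfl | hji
        · rw [dist_self]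
          nlinarith [mul_pos ht0 (pow_pos (hApos j) 2)]
        · nlinarith [mul_pos ht0 (pow_pos (hApos j) 2),
            mul_nonneg (by linarith : (0:ℝ) ≤ 1 - t) (sq_nonneg (dist (s i) (s j)))]
      refine lt_of_le_of_ne dist_nonneg fun h => ?_
      rw [← h] at h2
      norm_num at h2
    -- membership of path points
    have hfmem : ∀ t : ℝ, 0 < t → t ≤ 1 → f t ∈ recZoneA s P N α β i := by
      intro t ht0 ht1
      have hzne : ∀ j, f t ≠ s j := by
        intro j h
        exact (hdist_pos j t ht0 ht1).ne' (by rw [h, dist_self])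
      left
      refine ⟨fun ⟨j, hj⟩ => hzne j hj.symm, ?_⟩
      rw [sinr_char s P hP N β α hN i hne _ hzne]
      have hp_char := (sinr_char s P hP N β α hN i hne p hpz).1 hp'.2
      refine le_trans (mul_le_mul_of_nonneg_left ?_ hβ.le) hp_char
      have hRt : 0 < dist (f t) (s i) := hdist_pos i t ht0 ht1
      have hR1 : 0 < dist p (s i) := hApos i
      have hRtsq : dist (f t) (s i) ^ 2 = t * dist p (s i) ^ 2 := by
        rw [hdist i t ht0.le ht1, dist_self]
        ring
      have hRle : dist (f t) (s i) ≤ dist p (s i) := by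
        refine (pow_le_pow_iff_left₀ dist_nonneg dist_nonneg two_ne_zero).1 ?_
        rw [hRtsq]
        nlinarith [sq_nonneg (dist p (s i))]
      have hexp : -(2 * α) ≤ 0 := by linarith
      gcongr ?_ + ?_
      · refine Finset.sum_le_sum fun j hj => ?_
        have hji : j ≠ i := (Finset.mem_erase.1 hj).1
        have hMt : 0 < dist (f t) (s j) := hdist_pos j t ht0 ht1
        have hM1 : 0 < dist p (s j) := hApos j
        have hratio : dist p (s j) / dist p (s i) ≤ dist (f t) (s j) / dist (f t) (s i) := by
          rw [div_le_div_iff₀ hR1 hRt]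
          refine (pow_le_pow_iff_left₀ (mul_nonneg dist_nonneg dist_nonneg)
            (mul_nonneg dist_nonneg dist_nonneg) two_ne_zero).1 ?_
          rw [mul_pow, mul_pow, hRtsq, hdist j t ht0.le ht1]
          nlinarith [mul_nonneg (mul_nonneg (by linarith : (0:ℝ) ≤ 1 - t)
            (sq_nonneg (dist (s i) (s j)))) (sq_nonneg (dist p (s i)))]
        have hrpos : 0 < dist p (s j) / dist p (s i) := div_pos hM1 hR1
        have := Real.rpow_le_rpow_of_nonpos hrpos hratio hexp
        exact mul_le_mul_of_nonneg_left this (hP j).le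
      · refine mul_le_mul_of_nonneg_left ?_ hN
        exact Real.rpow_le_rpow dist_nonneg hRle (by linarith)
    -- assemble the path
    have hw_cont : Continuous w := by
      rw [hw_def]
      exact continuous_const.mul (Real.continuous_sqrt.comp (by fun_prop))
    have hf_cont : Continuous f := by
      rw [hf_def]
      exact (continuous_const.add (continuous_id.smul continuous_const)).add
        (hw_cont.smul continuous_const)
    have hf0 : f 0 = s i := by
      rw [hf_def, hw_def]
      simp
    have hf1 : f 1 = p := by
      have hw1 : w 1 = τ := by
        rw [hw_def]
        simp only [one_mul]
        have h1 : ‖q‖ ^ 2 - ‖qH‖ ^ 2 = τ ^ 2 := by rw [hPyth]; ring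
        rw [h1, Real.sqrt_sq_eq_abs, hσ_def]
        rcases lt_or_ge τ 0 with h | h
        · rw [if_pos h, abs_of_neg h]; ring
        · rw [if_neg (not_lt.2 h), abs_of_nonneg h]; ring
      rw [hf_def]
      simp only [one_smul, hw1]
      rw [hqH_def, hq_def]
      abel
    refine ⟨⟨⟨fun t => f t.1, hf_cont.comp continuous_subtype_val⟩, hf0, hf1⟩, fun t => ?_⟩
    rcases eq_or_lt_of_le t.2.1 with h0 | h0
    · show f t.1 ∈ _
      rw [← h0, hf0]
      exact hsi
    · exact hfmem t.1 h0 t.2.2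
  have hpc : IsPathConnected (recZoneA s P N α β i) :=
    ⟨s i, hsi, fun {y} hy => key y hy⟩
  exact hpc.isConnected
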